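/- Under the same setting with F additionally μ-strongly convex and 0 < τ ≤ 1/L, the inexact proximal gradient step x⁺ = prox_{τR}(x − τ(∇F(x) + e)) satisfies ‖x⁺ − x*‖² ≤ (1 − μτ)‖x − x*‖² + 2τ‖e‖·‖x⁺ − x*‖, where x* is the minimizer of F + R. -/

import Mathlib

/-!
The prox step is characterised by the subgradient inequality
`⟪v - x⁺, u - x⁺⟫ ≤ τ (R u - R x⁺)` with `v = x - τ (∇F x + e)`. Taking `u = x*`, the gradient term
`τ ⟪∇F x, x* - x⁺⟫` is bounded by strong convexity (from `x` to `x*`) and the descent lemma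
(from `x` to `x⁺`) by `τ (F x* - F x⁺) - (μτ/2) ‖x - x*‖² + (τL/2) ‖x⁺ - x‖²`. Optimality of `x*`
cancels the function values, `τL ≤ 1` lets the last term be absorbed by the polarization identity
`2 ⟪x - x⁺, x* - x⁺⟫ = ‖x - x⁺‖² + ‖x* - x⁺‖² - ‖x - x*‖²`, and Cauchy–Schwarz bounds the error term.
-/

open Set Filter Topology AffineMap RealInnerProductSpace

theorem le_of_forall_mem_Ioc_le_add_mul {a b M : ℝ} (h : ∀ t ∈ Ioc (0 : ℝ) 1, a ≤ b + t * M) :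
    a ≤ b := by
  have hlim : Tendsto (fun t : ℝ => b + t * M) (𝓝[>] 0) (𝓝 b) := by
    have : Continuous fun t : ℝ => b + t * M := by fun_prop
    simpa using (this.tendsto 0).mono_left nhdsWithin_le_nhds
  exact ge_of_tendsto hlim (eventually_of_mem (Ioc_mem_nhdsGT one_pos) h)

section

variable {E : Type*} [NormedAddCommGroup E] [InnerProductSpace ℝ E]

theorem ConvexOn.inner_sub_le_of_forall_prox_le {R : E → ℝ} (hR : ConvexOn ℝ univ R) {τ : ℝ}
    (hτ : 0 < τ) {v p : E}
    (hp : ∀ u, R p + 1 / (2 * τ) * ‖p - v‖ ^ 2 ≤ R u + 1 / (2 * τ) * ‖u - v‖ ^ 2) (u : E) :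
    ⟪v - p, u - p⟫ ≤ τ * (R u - R p) := by
  suffices 2 * ⟪v - p, u - p⟫ ≤ 2 * (τ * (R u - R p)) by linarith
  refine le_of_forall_mem_Ioc_le_add_mul (M := ‖u - p‖ ^ 2) fun t ⟨ht0, ht1⟩ => ?_
  have hmin := hp (lineMap p u t)
  have hconv : R (lineMap p u t) ≤ (1 - t) * R p + t * R u := by
    simpa [lineMap_apply_module] using
      hR.2 (mem_univ p) (mem_univ u) (sub_nonneg.2 ht1) ht0.le (sub_add_cancel 1 t)
  have hexpand : ‖lineMap p u t - v‖ ^ 2 =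
      ‖p - v‖ ^ 2 - 2 * t * ⟪v - p, u - p⟫ + t ^ 2 * ‖u - p‖ ^ 2 := by
    rw [lineMap_apply_module', show t • (u - p) + p - v = t • (u - p) - (v - p) by abel,
      norm_sub_sq_real, norm_smul, real_inner_smul_left, Real.norm_of_nonneg ht0.le,
      norm_sub_rev v p, real_inner_comm (v - p)]
    ring
  rw [hexpand] at hmin
  have : t * (2 * ⟪v - p, u - p⟫) ≤ t * (2 * (τ * (R u - R p)) + t * ‖u - p‖ ^ 2) := by
    field_simp at hmin
    nlinarith
  exact le_of_mul_le_mul_left this ht0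

variable [CompleteSpace E]

theorem HasGradientAt.hasDerivAt_comp_lineMap {f : E → ℝ} {f' x y : E} {t : ℝ}
    (h : HasGradientAt f f' (lineMap x y t)) : HasDerivAt (f ∘ lineMap x y) ⟪f', y - x⟫ t := by
  simpa using (hasGradientAt_iff_hasFDerivAt.mp h).comp_hasDerivAt t hasDerivAt_lineMap

theorem ConvexOn.add_inner_le_of_hasGradientAt {s : Set E} {f : E → ℝ} (hf : ConvexOn ℝ s f)
    {f' x y : E} (hx : x ∈ s) (hy : y ∈ s) (h : HasGradientAt f f' x) :
    f x + ⟪f', y - x⟫ ≤ f y := by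
  have hslope := (hf.comp_affineMap (lineMap x y)).le_slope_of_hasDerivAt (x := 0) (y := 1)
    (by simpa) (by simpa) zero_lt_one
    (HasGradientAt.hasDerivAt_comp_lineMap (by simpa))
  simp only [slope_def_field, Function.comp_apply, lineMap_apply_one, lineMap_apply_zero, sub_zero,
    div_one] at hslope
  linarith

theorem HasGradientAt.sub_half_mul_norm_sq {f : E → ℝ} {f' x : E} (h : HasGradientAt f f' x)
    (c : ℝ) :
    HasGradientAt (fun z => f z - c / 2 * ‖z‖ ^ 2) (f' - c • x) x := by
  rw [hasGradientAt_iff_hasFDerivAt] at h ⊢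
  refine (h.sub ((hasStrictFDerivAt_norm_sq x).hasFDerivAt.const_mul (c / 2))).congr_fderiv ?_
  ext w
  simp only [sub_apply, InnerProductSpace.toDual_apply_apply,
    smul_apply, coe_innerSL_apply, nsmul_eq_mul, Nat.cast_ofNat, smul_eq_mul,
    inner_sub_left, real_inner_smul_left]
  ring

theorem StrongConvexOn.add_inner_add_le_of_hasGradientAt {s : Set E} {μ : ℝ} {f : E → ℝ}
    (hf : StrongConvexOn s μ f) {f' x y : E} (hx : x ∈ s) (hy : y ∈ s)
    (h : HasGradientAt f f' x) :
    f x + ⟪f', y - x⟫ + μ / 2 * ‖y - x‖ ^ 2 ≤ f y := by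
  have := (strongConvexOn_iff_convex.1 hf).add_inner_le_of_hasGradientAt hx hy
    (h.sub_half_mul_norm_sq μ)
  rw [norm_sub_sq_real, real_inner_comm x y, inner_sub_right]
  simp only [inner_sub_left, inner_sub_right, real_inner_smul_left, real_inner_self_eq_norm_sq]
    at this
  linarith

theorem le_add_inner_add_of_lipschitz_gradient {f : E → ℝ} {f' : E → E}
    (hf : ∀ z, HasGradientAt f (f' z) z) {L : ℝ} (hLip : ∀ x y, ‖f' x - f' y‖ ≤ L * ‖x - y‖)
    (x y : E) : f y ≤ f x + ⟪f' x, y - x⟫ + L / 2 * ‖y - x‖ ^ 2 := by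
  have hderiv (t : ℝ) : HasDerivAt (fun t => f (lineMap x y t) - t * ⟪f' x, y - x⟫)
      (⟪f' (lineMap x y t) - f' x, y - x⟫) t := by
    rw [inner_sub_left]
    exact ((hf (lineMap x y t)).hasDerivAt_comp_lineMap).sub (hasDerivAt_mul_const _)
  have hbound :
      ∀ t ∈ Ico (0 : ℝ) 1, ⟪f' (lineMap x y t) - f' x, y - x⟫ ≤ L * t * ‖y - x‖ ^ 2 := by
    intro t ⟨ht0, _⟩
    calc ⟪f' (lineMap x y t) - f' x, y - x⟫ ≤ ‖f' (lineMap x y t) - f' x‖ * ‖y - x‖ :=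
          real_inner_le_norm _ _
      _ ≤ L * ‖lineMap x y t - x‖ * ‖y - x‖ := by gcongr; exact hLip _ _
      _ = L * t * ‖y - x‖ ^ 2 := by
          rw [← vsub_eq_sub, lineMap_vsub_left, vsub_eq_sub, norm_smul, Real.norm_of_nonneg ht0]
          ring
  have hB (t : ℝ) : HasDerivAt (fun t => f x + L / 2 * t ^ 2 * ‖y - x‖ ^ 2)
      (L * t * ‖y - x‖ ^ 2) t := by
    refine ((((hasDerivAt_pow 2 t).const_mul (L / 2)).mul_const _).const_add (f x)).congr_deriv ?_
    push_cast
    ring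
  have := image_le_of_deriv_right_le_deriv_boundary (a := 0) (b := 1)
    (fun t _ => (hderiv t).continuousAt.continuousWithinAt)
    (fun t _ => (hderiv t).hasDerivWithinAt) (by simp)
    (fun t _ => (hB t).continuousAt.continuousWithinAt)
    (fun t _ => (hB t).hasDerivWithinAt) hbound (right_mem_Icc.2 zero_le_one)
  simp only [lineMap_apply_one, one_mul, one_pow, mul_one, tsub_le_iff_right] at this
  linarith

end

theorem inexact_prox_grad_strongly_convex_bound_general {n : ℕ}
    (F R : EuclideanSpace ℝ (Fin n) → ℝ) (F' : EuclideanSpace ℝ (Fin n) → EuclideanSpace ℝ (Fin n))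
    (μ : ℝ) (hFsc : StrongConvexOn Set.univ μ F)
    (hRconv : ConvexOn ℝ Set.univ R)
    (hgrad : ∀ x, HasGradientAt F (F' x) x)
    (L : ℝ) (hL : 0 < L) (hLip : ∀ x y, ‖F' x - F' y‖ ≤ L * ‖x - y‖)
    (xs : EuclideanSpace ℝ (Fin n)) (hmin : ∀ y, F xs + R xs ≤ F y + R y)
    (τ : ℝ) (hτ0 : 0 < τ) (hτL : τ ≤ 1 / L)
    (x e xplus : EuclideanSpace ℝ (Fin n))
    (hprox : ∀ u, R xplus + (1 / (2 * τ)) * ‖xplus - (x - τ • (F' x + e))‖ ^ 2 ≤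
      R u + (1 / (2 * τ)) * ‖u - (x - τ • (F' x + e))‖ ^ 2) :
    ‖xplus - xs‖ ^ 2 ≤ (1 - μ * τ) * ‖x - xs‖ ^ 2 + 2 * τ * ‖e‖ * ‖xplus - xs‖ := by
  have hτL' : τ * L ≤ 1 := by rwa [le_div_iff₀ hL] at hτL
  have hstep := hRconv.inner_sub_le_of_forall_prox_le hτ0 hprox xs
  rw [show x - τ • (F' x + e) - xplus = (x - xplus) - τ • F' x - τ • e by module,
    inner_sub_left, inner_sub_left, real_inner_smul_left, real_inner_smul_left] at hstep
  have hgrad_inner : ⟪F' x, xs - xplus⟫ ≤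
      F xs - F xplus - μ / 2 * ‖x - xs‖ ^ 2 + L / 2 * ‖xplus - x‖ ^ 2 := by
    have hsc := hFsc.add_inner_add_le_of_hasGradientAt (mem_univ x) (mem_univ xs) (hgrad x)
    have hdesc := le_add_inner_add_of_lipschitz_gradient hgrad hLip x xplus
    rw [show xs - xplus = (xs - x) - (xplus - x) by abel, inner_sub_right, norm_sub_rev x xs]
    linarith
  have he : ⟪e, xs - xplus⟫ ≤ ‖e‖ * ‖xplus - xs‖ :=
    norm_sub_rev xs xplus ▸ real_inner_le_norm e (xs - xplus)
  have hpolar := norm_sub_sq_real (x - xplus) (xs - xplus)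
  rw [show x - xplus - (xs - xplus) = x - xs by abel, norm_sub_rev x xplus,
    norm_sub_rev xs xplus] at hpolar
  linarith [mul_le_mul_of_nonneg_left (hmin xplus) hτ0.le,
    mul_le_mul_of_nonneg_left hgrad_inner hτ0.le, mul_le_mul_of_nonneg_left he hτ0.le,
    mul_nonneg (sub_nonneg.2 hτL') (sq_nonneg ‖xplus - x‖)]

/-- With `F` additionally `μ`-strongly convex and `0 < τ ≤ 1/L`, the inexact proximal
gradient step `x⁺ = prox_{τR}(x − τ(∇F(x) + e))` satisfies
`‖x⁺ − x*‖² ≤ (1 − μτ)‖x − x*‖² + 2τ‖e‖·‖x⁺ − x*‖` where `x*` minimizes `F + R`. -/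
theorem inexact_prox_grad_strongly_convex_bound {n : ℕ}
    (F R : EuclideanSpace ℝ (Fin n) → ℝ) (F' : EuclideanSpace ℝ (Fin n) → EuclideanSpace ℝ (Fin n))
    (μ : ℝ) (hμ : 0 < μ) (hFsc : StrongConvexOn Set.univ μ F)
    (hRconv : ConvexOn ℝ Set.univ R)
    (hgrad : ∀ x, HasGradientAt F (F' x) x)
    (L : ℝ) (hL : 0 < L) (hLip : ∀ x y, ‖F' x - F' y‖ ≤ L * ‖x - y‖)
    (xs : EuclideanSpace ℝ (Fin n)) (hmin : ∀ y, F xs + R xs ≤ F y + R y)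
    (τ : ℝ) (hτ0 : 0 < τ) (hτL : τ ≤ 1 / L)
    (x e xplus : EuclideanSpace ℝ (Fin n))
    (hprox : ∀ u, R xplus + (1 / (2 * τ)) * ‖xplus - (x - τ • (F' x + e))‖ ^ 2 ≤
      R u + (1 / (2 * τ)) * ‖u - (x - τ • (F' x + e))‖ ^ 2) :
    ‖xplus - xs‖ ^ 2 ≤ (1 - μ * τ) * ‖x - xs‖ ^ 2 + 2 * τ * ‖e‖ * ‖xplus - xs‖ :=
  inexact_prox_grad_strongly_convex_bound_general F R F' μ hFsc hRconv hgrad L hL hLip xs hmin τ hτ0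
    hτL x e xplus hprox
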